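/- For the gradient on ℝ³ with Green's function G(x) = (∂₁, ∂₂, ∂₃)(1/(4π|x|)), cocanceling operator given by the curl, and K(y) the 3×3 antisymmetric matrix with K(y)v = y × v: the identity ∂_{x₁}G(x) K_{e₂} = ∂_{x₂}G(x) K_{e₁} fails; explicitly, the row vectors obtained by applying (∂₁∂₃, 0, −∂₁²) and (0, −∂₂∂₃, ∂₂²) to |x|^{−1} are not equal as functions on ℝ³∖{0}. -/

import Mathlib

noncomputable abbrev E3 := EuclideanSpace ℝ (Fin 3)

noncomputable def pd (i : Fin 3) (f : E3 → ℝ) (x : E3) : ℝ :=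
  fderiv ℝ f x (EuclideanSpace.single i 1)

/-- `|x|⁻¹` on `ℝ³`. -/
noncomputable def invNorm (x : E3) : ℝ := ‖x‖⁻¹

/-! Writing `‖x‖⁻¹ = ‖x‖ ^ (-1)`, the chain rule gives `∂ᵢ‖x‖⁻¹ = -xᵢ ‖x‖⁻³` and
`∂ⱼ∂ᵢ‖x‖⁻¹ = 3 xᵢ xⱼ ‖x‖⁻⁵ - δᵢⱼ ‖x‖⁻³` away from the origin. At `x = e₁` the last entries of
the two row vectors are `-∂₁²‖x‖⁻¹ = -2` and `∂₂²‖x‖⁻¹ = -1`. -/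

open Real

theorem hasStrictFDerivAt_norm_rpow_of_ne_zero {E : Type*} [NormedAddCommGroup E]
    [InnerProductSpace ℝ E] {x : E} (hx : x ≠ 0) (p : ℝ) :
    HasStrictFDerivAt (fun y : E ↦ ‖y‖ ^ p) ((p * ‖x‖ ^ (p - 2)) • innerSL ℝ x) x := by
  convert! (hasStrictFDerivAt_norm_sq x).rpow_const (p := p / 2) (by simp [hx]) using 0
  simp_rw [← Real.rpow_natCast_mul (norm_nonneg _), ← Nat.cast_smul_eq_nsmul ℝ, smul_smul]
  ring_nf

theorem pd_eq_of_hasFDerivAt {f : E3 → ℝ} {f' : E3 →L[ℝ] ℝ} {x : E3}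
    (hf : HasFDerivAt f f' x) (i : Fin 3) : pd i f x = f' (EuclideanSpace.single i 1) := by
  rw [pd, hf.fderiv]

theorem invNorm_eq_rpow : invNorm = fun y : E3 ↦ ‖y‖ ^ (-1 : ℝ) := by
  funext y
  rw [invNorm, rpow_neg_one]

theorem pd_invNorm {x : E3} (hx : x ≠ 0) (i : Fin 3) :
    pd i invNorm x = -(‖x‖ ^ (-3 : ℝ) * x i) := by
  rw [invNorm_eq_rpow,
    pd_eq_of_hasFDerivAt (hasStrictFDerivAt_norm_rpow_of_ne_zero hx _).hasFDerivAt]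
  norm_num [EuclideanSpace.inner_single_right]

theorem pd_pd_invNorm {x : E3} (hx : x ≠ 0) (i j : Fin 3) :
    pd j (pd i invNorm) x =
      3 * ‖x‖ ^ (-5 : ℝ) * x i * x j - ‖x‖ ^ (-3 : ℝ) * (if i = j then 1 else 0) := by
  have h_eq : pd i invNorm =ᶠ[nhds x] fun y : E3 ↦ -(‖y‖ ^ (-3 : ℝ) * y i) := by
    filter_upwards [isOpen_ne.mem_nhds hx] with y hy
    exact pd_invNorm hy i
  have h_deriv : HasFDerivAt (fun y : E3 ↦ -(‖y‖ ^ (-3 : ℝ) * y i)) _ x :=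
    ((hasStrictFDerivAt_norm_rpow_of_ne_zero hx (-3)).hasFDerivAt.mul
      (EuclideanSpace.proj i : E3 →L[ℝ] ℝ).hasFDerivAt).neg
  rw [pd_eq_of_hasFDerivAt (h_deriv.congr_of_eventuallyEq h_eq)]
  norm_num [EuclideanSpace.inner_single_right, PiLp.single_apply, eq_comm]
  ring

/-- The identity `∂_{x₁}G(x) K_{e₂} = ∂_{x₂}G(x) K_{e₁}` fails for the gradient on `ℝ³`:
the row vectors `(∂₁∂₃, 0, −∂₁²)|x|⁻¹` and `(0, −∂₂∂₃, ∂₂²)|x|⁻¹` differ at some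
`x ∈ ℝ³ ∖ {0}`. -/
theorem stmt_17 :
    ∃ x : E3, x ≠ 0 ∧
      ![pd 0 (pd 2 invNorm) x, 0, -(pd 0 (pd 0 invNorm) x)] ≠
        ![(0 : ℝ), -(pd 1 (pd 2 invNorm) x), pd 1 (pd 1 invNorm) x] := by
  set e₁ := EuclideanSpace.single (0 : Fin 3) (1 : ℝ)
  have he₁ : e₁ ≠ 0 := by simp [e₁]
  have h₁₁ : pd 0 (pd 0 invNorm) e₁ = 2 := by norm_num [pd_pd_invNorm he₁, e₁]
  have h₂₂ : pd 1 (pd 1 invNorm) e₁ = -1 := by norm_num [pd_pd_invNorm he₁, e₁]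
  refine ⟨e₁, he₁, fun h ↦ ?_⟩
  simpa [h₁₁, h₂₂] using congrFun h 2
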